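/- For a circuit input Λ that assigns 1 to exactly one indicator per variable (corresponding to a unique full instantiation x), evaluating a decomposable and smooth circuit under Λ yields AC(x); more generally, if Λ assigns 1 to a set of indicators so that its compatible full instantiations are x_1, …, x_m, and AC computes a factor f, then AC evaluates under Λ to f(x_1) + … + f(x_m). -/

import Mathlib

/-- An arithmetic circuit over variables `ι` with values `α`: leaves are indicator
variables `λ_{i,v}` or real parameters; internal nodes are sums or products. -/
inductive AC (ι α : Type) : Type where
  | ind (i : ι) (v : α)
  | param (θ : ℝ)
  | sum (l r : AC ι α)
  | prod (l r : AC ι α)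

namespace AC

variable {ι α : Type} [Fintype ι] [DecidableEq ι] [Fintype α] [DecidableEq α]

/-- Evaluate the circuit under a circuit input `Λ` assigning 0/1 to each indicator. -/
def eval (Λ : ι → α → Bool) : AC ι α → ℝ
  | ind i v => if Λ i v then 1 else 0
  | param θ => θ
  | sum l r => l.eval Λ + r.eval Λ
  | prod l r => l.eval Λ * r.eval Λ

/-- Evaluate the maximizer circuit (sum nodes replaced by max nodes). -/
def evalMax (Λ : ι → α → Bool) : AC ι α → ℝ
  | ind i v => if Λ i v then 1 else 0
  | param θ => θ
  | sum l r => max (l.evalMax Λ) (r.evalMax Λ)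
  | prod l r => l.evalMax Λ * r.evalMax Λ

/-- The circuit input corresponding to a full instantiation `x`. -/
def inputOf (x : ι → α) : ι → α → Bool := fun i v => decide (x i = v)

/-- The circuit input corresponding to a partial instantiation `y`:
an indicator is set to 1 iff its value is compatible with `y`. -/
def pinputOf (y : ι → Option α) : ι → α → Bool := fun i v =>
  match y i with
  | none => true
  | some w => decide (w = v)

/-- The value `AC(x)` of the circuit at a full instantiation `x`. -/
def evalAt (x : ι → α) (c : AC ι α) : ℝ := c.eval (inputOf x)

/-- The value `AC(y)` of the circuit at a partial instantiation `y`. -/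
def evalP (y : ι → Option α) (c : AC ι α) : ℝ := c.eval (pinputOf y)

/-- Maximizer-circuit value at a full instantiation. -/
def evalMaxAt (x : ι → α) (c : AC ι α) : ℝ := c.evalMax (inputOf x)

/-- Maximizer-circuit value at a partial instantiation. -/
def evalMaxP (y : ι → Option α) (c : AC ι α) : ℝ := c.evalMax (pinputOf y)

/-- `vars n`: variables with some indicator at or under the node. -/
def vars : AC ι α → Finset ι
  | ind i _ => {i}
  | param _ => ∅
  | sum l r => l.vars ∪ r.vars
  | prod l r => l.vars ∪ r.vars

/-- The multiset of parameters appearing in the circuit. -/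
def params : AC ι α → Multiset ℝ
  | ind _ _ => 0
  | param θ => {θ}
  | sum l r => l.params + r.params
  | prod l r => l.params + r.params

/-- Decomposability: children of every `*`-node have disjoint variable sets. -/
def Decomposable : AC ι α → Prop
  | ind _ _ => True
  | param _ => True
  | sum l r => l.Decomposable ∧ r.Decomposable
  | prod l r => Disjoint l.vars r.vars ∧ l.Decomposable ∧ r.Decomposable

/-- Smoothness: every child of a `+`-node mentions the same variables as the node. -/
def Smooth : AC ι α → Prop
  | ind _ _ => True
  | param _ => True
  | sum l r => l.vars = r.vars ∧ l.Smooth ∧ r.Smooth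
  | prod l r => l.Smooth ∧ r.Smooth

/-- Determinism: under every full instantiation, every `+`-node has at most one
non-zero input. -/
def Deterministic : AC ι α → Prop
  | ind _ _ => True
  | param _ => True
  | sum l r => (∀ x : ι → α, l.evalAt x = 0 ∨ r.evalAt x = 0) ∧
      l.Deterministic ∧ r.Deterministic
  | prod l r => l.Deterministic ∧ r.Deterministic

/-- A full instantiation `x` is compatible with a partial instantiation `y`. -/
def Compat (x : ι → α) (y : ι → Option α) : Prop :=
  ∀ i, y i = none ∨ y i = some (x i)

instance (x : ι → α) (y : ι → Option α) : Decidable (Compat x y) := by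
  unfold Compat; infer_instance

/-- The graph of a full instantiation, i.e. its term `{(i, x i) | i}`. -/
def graphOf (x : ι → α) : Finset (ι × α) := Finset.univ.image fun i => (i, x i)

/-- The marginal `Σ_{x ∼ y} f(x)` of a factor `f` at a partial instantiation `y`. -/
def margSum (f : (ι → α) → ℝ) (y : ι → Option α) : ℝ :=
  ∑ x : ι → α, if Compat x y then f x else 0

/-- The circuit computes the factor `f`. -/
def Computes (c : AC ι α) (f : (ι → α) → ℝ) : Prop := ∀ x, c.evalAt x = f x

/-- The circuit computes the marginals of the factor `f`. -/
def ComputesMarginals (c : AC ι α) (f : (ι → α) → ℝ) : Prop :=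
  ∀ y : ι → Option α, c.evalP y = margSum f y

/-- The multiset of (term, coefficient) pairs of all complete subcircuits. -/
def subs : AC ι α → Multiset (Finset (ι × α) × ℝ)
  | ind i v => {({(i, v)}, 1)}
  | param θ => {(∅, θ)}
  | sum l r => l.subs + r.subs
  | prod l r => l.subs.bind fun a => r.subs.map fun b => (a.1 ∪ b.1, a.2 * b.2)

/-- Complete subcircuits of a circuit: choose one child of each `+`-node and all
children of each `*`-node. -/
inductive Sub : AC ι α → Type where
  | ind (i : ι) (v : α) : Sub (AC.ind i v)
  | param (θ : ℝ) : Sub (AC.param θ)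
  | sumL {l r : AC ι α} : Sub l → Sub (AC.sum l r)
  | sumR {l r : AC ι α} : Sub r → Sub (AC.sum l r)
  | prod {l r : AC ι α} : Sub l → Sub r → Sub (AC.prod l r)

/-- The term of a complete subcircuit: the set of indicator values appearing in it. -/
def Sub.term : {c : AC ι α} → Sub c → Finset (ι × α)
  | _, .ind i v => {(i, v)}
  | _, .param _ => ∅
  | _, .sumL s => s.term
  | _, .sumR s => s.term
  | _, .prod s t => s.term ∪ t.term

/-- The coefficient of a complete subcircuit: the product of its parameters. -/
def Sub.coeff : {c : AC ι α} → Sub c → ℝ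
  | _, .ind _ _ => 1
  | _, .param θ => θ
  | _, .sumL s => s.coeff
  | _, .sumR s => s.coeff
  | _, .prod s t => s.coeff * t.coeff


end AC

/-! Part (a) holds because such a `Λ` is exactly `inputOf x`. For (b), induct on the circuit: summing
`c(x)` over the instantiations `x` compatible with `Λ` on `c.vars` gives `c.eval Λ` times
`|α| ^ |c.varsᶜ|`, the number of free choices outside `c.vars`. Smoothness lets both children of a
`+`-node be summed under the same constraint; decomposability makes the two factors of a `*`-node
depend on disjoint sets of coordinates, so the sum of their product is the product of their sums up
to the factor `|α| ^ |ι|`. With `c.vars = univ` no coordinate is free. -/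

section

variable {ι α : Type*}

lemma DependsOn.ite {β : Type*} {S : Set ι} {P : (ι → α) → Prop} [DecidablePred P]
    {f g : (ι → α) → β} (hP : DependsOn P S) (hf : DependsOn f S) (hg : DependsOn g S) :
    DependsOn (fun x => if P x then f x else g x) S := fun x y h => by
  simp only [hP h, hf h, hg h]

lemma dependsOn_forall_mem (Λ : ι → α → Bool) (S : Finset ι) :
    DependsOn (fun x : ι → α => ∀ i ∈ S, Λ i (x i) = true) S := fun x y h =>
  propext <| forall₂_congr fun i hi => by rw [h i hi]

variable [DecidableEq ι] [Fintype ι] [Fintype α]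

lemma sum_mul_sum_eq_card_mul_sum_mul {R : Type*} [CommSemiring R] {S : Finset ι}
    {A B : (ι → α) → R} (hA : DependsOn A S) (hB : DependsOn B (↑S)ᶜ) :
    (∑ x, A x) * (∑ y, B y) = Fintype.card (ι → α) * ∑ x, A x * B x := by
  -- exchanging the `S`-coordinates of the two summation variables keeps `A` and `B` unchanged
  let swapOn : (ι → α) × (ι → α) → (ι → α) × (ι → α) :=
    fun p => (S.piecewise p.1 p.2, S.piecewise p.2 p.1)
  have hswap : swapOn.Involutive := fun p => by
    ext i <;> by_cases hi : i ∈ S <;> simp [swapOn, hi]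
  calc (∑ x, A x) * (∑ y, B y)
      = ∑ p : (ι → α) × (ι → α), A (swapOn p).1 * B (swapOn p).2 := by
        rw [Fintype.sum_bijective swapOn hswap.bijective _ (fun p => A p.1 * B p.2) fun _ => rfl,
          Fintype.sum_mul_sum, Fintype.sum_prod_type]
    _ = ∑ p : (ι → α) × (ι → α), A p.1 * B p.1 := by
        refine Fintype.sum_congr _ _ fun p => ?_
        rw [hA (y := p.1) fun i hi => by simp [swapOn, Finset.mem_coe.mp hi],
          hB (y := p.1) fun i hi => by simp_all [swapOn]]
    _ = Fintype.card (ι → α) * ∑ x, A x * B x := by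
        rw [Fintype.sum_prod_type, Finset.sum_comm]
        simp [Finset.mul_sum]

lemma sum_ite_apply_eq {R : Type*} [CommSemiring R] [DecidableEq α] (i : ι) (v : α) (t : R) :
    ∑ x : ι → α, (if x i = v then t else 0) = Fintype.card α ^ (Fintype.card ι - 1) * t := by
  rw [← Finset.sum_filter, Finset.sum_const, nsmul_eq_mul, ← Fintype.piFinset_univ,
    Fintype.card_filter_piFinset_const, if_pos (Finset.mem_univ v), Finset.card_univ]
  push_cast
  rfl

lemma Finset.card_compl_add_card_compl {L R : Finset ι} (hLR : Disjoint L R) :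
    Lᶜ.card + Rᶜ.card = Fintype.card ι + (L ∪ R)ᶜ.card := by
  rw [← Finset.card_union_add_card_inter, ← Finset.compl_inter, ← Finset.compl_union,
    Finset.disjoint_iff_inter_eq_empty.mp hLR, Finset.compl_empty, Finset.card_univ]

end

namespace AC

variable {ι α : Type} [DecidableEq ι]

lemma eval_congr {c : AC ι α} {Λ Λ' : ι → α → Bool} (h : ∀ i ∈ c.vars, Λ i = Λ' i) :
    c.eval Λ = c.eval Λ' := by
  induction c with
  | ind i v => simp [eval, h i (Finset.mem_singleton_self i)]
  | param θ => rfl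
  | sum l r ihl ihr | prod l r ihl ihr =>
    simp only [eval, vars, Finset.forall_mem_union] at h ⊢
    rw [ihl h.1, ihr h.2]

lemma dependsOn_evalAt [DecidableEq α] (c : AC ι α) : DependsOn (c.evalAt ·) c.vars :=
  fun x y h => eval_congr fun i hi => funext fun v => by simp [inputOf, h i hi]

lemma nonempty_of_mem_vars {c : AC ι α} {i : ι} (h : i ∈ c.vars) : Nonempty α := by
  induction c with
  | ind _ v => exact ⟨v⟩
  | param _ => simp only [vars, Finset.notMem_empty] at h
  | sum l r ihl ihr | prod l r ihl ihr =>
    rcases Finset.mem_union.mp h with h | h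
    exacts [ihl h, ihr h]

section Compatible

variable [Fintype ι] [Fintype α]

lemma card_mul_sum_ite_compatible_mul {L R : Finset ι} (hLR : Disjoint L R)
    {g h : (ι → α) → ℝ} (hg : DependsOn g L) (hh : DependsOn h R) (Λ : ι → α → Bool) :
    Fintype.card (ι → α) * ∑ x, (if ∀ i ∈ L ∪ R, Λ i (x i) = true then g x * h x else 0)
      = (∑ x, if ∀ i ∈ L, Λ i (x i) = true then g x else 0)
        * ∑ x, if ∀ i ∈ R, Λ i (x i) = true then h x else 0 := by
  have hL := DependsOn.ite (dependsOn_forall_mem Λ L) hg ((dependsOn_const 0).mono (by simp))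
  have hR := (DependsOn.ite (dependsOn_forall_mem Λ R) hh ((dependsOn_const 0).mono (by simp))).mono
    fun i hi => Finset.disjoint_right.mp hLR hi
  rw [sum_mul_sum_eq_card_mul_sum_mul hL hR]
  simp only [Finset.forall_mem_union, ite_zero_mul_ite_zero]

variable [DecidableEq α]

theorem sum_ite_compatible_evalAt [Nonempty (ι → α)] {c : AC ι α} (hd : c.Decomposable)
    (hs : c.Smooth) (Λ : ι → α → Bool) :
    ∑ x, (if ∀ i ∈ c.vars, Λ i (x i) = true then c.evalAt x else 0)
      = c.eval Λ * Fintype.card α ^ c.varsᶜ.card := by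
  induction c with
  | ind i v =>
    simp only [vars, evalAt, eval, inputOf, decide_eq_true_eq]
    calc _ = ∑ x : ι → α, if x i = v then (if Λ i v = true then (1 : ℝ) else 0) else 0 :=
          Fintype.sum_congr _ _ fun x => by by_cases hx : x i = v <;> simp [hx]
      _ = _ := by rw [sum_ite_apply_eq, Finset.card_compl, Finset.card_singleton, mul_comm]
  | param θ =>
    simp [vars, evalAt, eval, mul_comm]
  | sum l r ihl ihr =>
    obtain ⟨hvars, hsl, hsr⟩ := hs
    simp only [vars, evalAt, eval, ← hvars, Finset.union_self] at ihl ihr ⊢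
    rw [add_mul, ← ihl hd.1 hsl, ← ihr hd.2 hsr, ← Finset.sum_add_distrib]
    exact Fintype.sum_congr _ _ fun x => by split_ifs <;> simp
  | prod l r ihl ihr =>
    obtain ⟨hdisj, hdl, hdr⟩ := hd
    have key := card_mul_sum_ite_compatible_mul hdisj (dependsOn_evalAt l) (dependsOn_evalAt r) Λ
    rw [ihl hdl hs.1, ihr hdr hs.2] at key
    refine mul_left_cancel₀ (Nat.cast_ne_zero.mpr Fintype.card_ne_zero) (key.trans ?_)
    simp only [eval, vars, Fintype.card_fun, Nat.cast_pow]
    rw [mul_mul_mul_comm, ← pow_add, Finset.card_compl_add_card_compl hdisj, pow_add]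
    ring

theorem eval_eq_sum_compatible_of_computes [Nonempty (ι → α)] {c : AC ι α}
    (hd : c.Decomposable) (hs : c.Smooth) (hv : c.vars = Finset.univ) {f : (ι → α) → ℝ}
    (hf : c.Computes f) (Λ : ι → α → Bool) :
    c.eval Λ = ∑ x : ι → α, if ∀ i, Λ i (x i) = true then f x else 0 := by
  simpa [hv, ← hf _] using (sum_ite_compatible_evalAt hd hs Λ).symm

end Compatible

end AC

/-- For a decomposable and smooth circuit: (a) an input setting exactly the
indicators of a full instantiation `x` to `1` evaluates to `AC(x)`; (b) if the
circuit computes a factor `f`, then under any input `Λ` it evaluates to the sum of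
`f(x)` over the full instantiations `x` compatible with `Λ`. -/
theorem stmt17 {ι α : Type} [Fintype ι] [DecidableEq ι] [Fintype α] [DecidableEq α]
    (c : AC ι α) (hd : c.Decomposable) (hs : c.Smooth) (hv : c.vars = Finset.univ) :
    (∀ (Λ : ι → α → Bool) (x : ι → α), (∀ i v, Λ i v = true ↔ x i = v) →
      c.eval Λ = c.evalAt x) ∧
    (∀ f : (ι → α) → ℝ, c.Computes f → ∀ Λ : ι → α → Bool,
      c.eval Λ = ∑ x : ι → α, if ∀ i, Λ i (x i) = true then f x else 0) := by
  refine ⟨fun Λ x hΛ => ?_, fun f hf Λ => ?_⟩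
  · have hΛx : Λ = AC.inputOf x := funext₂ fun i v => by simp [AC.inputOf, ← hΛ i v]
    rw [hΛx, AC.evalAt]
  · have : Nonempty (ι → α) :=
      ⟨fun i => (AC.nonempty_of_mem_vars (hv ▸ Finset.mem_univ i : i ∈ c.vars)).some⟩
    exact AC.eval_eq_sum_compatible_of_computes hd hs hv hf Λ
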